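/- Let s ≥ 2 and k ≥ 1 be integers, let θ be a bijection of the k-blocks (Fin k → Fin s), and let F : ℝ → ℝ satisfy: for every admissible digit sequence a, F(∑_{n=0}^∞ a n / s^{n+1}) = ∑_{n=0}^∞ (Θ a) n / s^{n+1}. Then the graph of F over [0,1), i.e. the set { p : ℝ × ℝ | ∃ x ∈ [0,1), p = (x, F x) }, has Hausdorff dimension equal to 1. (Paper's Theorem 3 for functions of type f^s_k.) -/

import Mathlib

/-!
Two points of `[0,1)` in the same `s`-adic interval of length `s^(-k m)` share their first `k m`
digits; since `Θ` acts block by block, so do their images, hence `F` oscillates by at most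
`s^(-k m)` on that interval. The graph is thus covered by `s^(k m)` pieces of diameter
`s^(-k m)`, so its one-dimensional Hausdorff measure is at most `1` and `dimH ≤ 1`; projecting
onto the first coordinate gives `dimH ≥ 1`.
-/

open scoped ENNReal
open Set Filter MeasureTheory Metric

namespace Real

theorem ofDigits_eq_tsum_div {b : ℕ} (a : ℕ → Fin b) :
    ofDigits a = ∑' n, ((a n : ℕ) : ℝ) / (b : ℝ) ^ (n + 1) := by
  simp only [ofDigits, ofDigitsTerm, div_eq_mul_inv]

theorem not_eventually_digits_eq_pred {b : ℕ} [NeZero b] (hb : 1 < b) {x : ℝ}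
    (hx : x ∈ Ico 0 1) : ¬ ∃ N, ∀ n ≥ N, (digits x b n : ℕ) = b - 1 := by
  rintro ⟨N, hN⟩
  have htail : (fun i ↦ digits x b (i + N)) = fun _ ↦ ⟨b - 1, Nat.sub_one_lt_of_lt hb⟩ :=
    funext fun i ↦ Fin.ext (hN (i + N) (Nat.le_add_left N i))
  have hsplit := ofDigits_eq_sum_add_ofDigits (digits x b) N
  rw [htail, ofDigits_const_last_eq_one' hb, ofDigits_digits hb hx, mul_one] at hsplit
  have hfloor := ofDigits_digits_sum_eq (b := b) hx N
  have hpow : (0 : ℝ) < (b : ℝ) ^ N := by positivity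
  -- a tail of `b - 1`s would make `b ^ N * x` an integer one above its own floor
  have : (b : ℝ) ^ N * x = ⌊(b : ℝ) ^ N * x⌋₊ + 1 := by
    calc (b : ℝ) ^ N * x = (b : ℝ) ^ N * (∑ i ∈ Finset.range N, ofDigitsTerm (digits x b) i
          + ((b : ℝ) ^ N)⁻¹) := by rw [← hsplit]
      _ = ⌊(b : ℝ) ^ N * x⌋₊ + 1 := by rw [mul_add, hfloor, mul_inv_cancel₀ hpow.ne']
  linarith [Nat.lt_floor_add_one ((b : ℝ) ^ N * x)]

theorem digits_eq_of_floor_eq {b : ℕ} [NeZero b] {x y : ℝ} {n : ℕ}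
    (h : ⌊(b : ℝ) ^ n * x⌋₊ = ⌊(b : ℝ) ^ n * y⌋₊) : ∀ i < n, digits x b i = digits y b i := by
  intro i hi
  have hfloor (z : ℝ) : ⌊z * b ^ (i + 1)⌋₊ = ⌊(b : ℝ) ^ n * z⌋₊ / b ^ (n - (i + 1)) := by
    rw [← Nat.floor_div_natCast]
    congr 1
    have : (b : ℝ) ^ n = b ^ (n - (i + 1)) * b ^ (i + 1) := by
      rw [← pow_add, Nat.sub_add_cancel hi]
    have hb : (b : ℝ) ^ (n - (i + 1)) ≠ 0 := pow_ne_zero _ (Nat.cast_ne_zero.2 (NeZero.ne b))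
    push_cast
    rw [this]
    field_simp
  simp only [digits, hfloor, h]

end Real

theorem blockwise_eq_of_prefix_eq {α β : Type*} {k : ℕ}
    {θ : (Fin k → α) → (Fin k → β)} {Θ : (ℕ → α) → (ℕ → β)}
    (hΘ : ∀ a m (i : Fin k), Θ a (k * m + i) = θ (fun j ↦ a (k * m + j)) i)
    {a a' : ℕ → α} {m : ℕ} (h : ∀ n < k * m, a n = a' n) : ∀ n < k * m, Θ a n = Θ a' n := by
  intro n hn
  have hk : 0 < k := Nat.pos_of_ne_zero (by rintro rfl; simp at hn)
  obtain ⟨q, i, rfl⟩ : ∃ q, ∃ i : Fin k, n = k * q + i :=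
    ⟨n / k, ⟨n % k, Nat.mod_lt n hk⟩, (Nat.div_add_mod n k).symm⟩
  have hq : q < m := by nlinarith [i.2]
  have hblock : ∀ j : Fin k, k * q + j < k * m := fun j ↦ by nlinarith [j.2]
  rw [hΘ, hΘ]
  congr 2
  exact funext fun j ↦ h _ (hblock j)

theorem one_le_dimH_graph (f : ℝ → ℝ) :
    1 ≤ dimH {p : ℝ × ℝ | ∃ x ∈ Ico (0 : ℝ) 1, p = (x, f x)} := by
  have hfst : Prod.fst '' {p : ℝ × ℝ | ∃ x ∈ Ico (0 : ℝ) 1, p = (x, f x)} = Ico 0 1 := by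
    ext x
    simp
  have hIco : dimH (Ico (0 : ℝ) 1) = 1 := by
    rw [Real.dimH_of_nonempty_interior (by simp), Module.finrank_self, Nat.cast_one]
  calc (1 : ℝ≥0∞) = dimH (Ico (0 : ℝ) 1) := hIco.symm
    _ = dimH (Prod.fst '' _) := by rw [hfst]
    _ ≤ _ := LipschitzWith.prod_fst.dimH_image_le _

theorem hausdorffMeasure_one_le_of_covers {X : Type*} [EMetricSpace X] [MeasurableSpace X]
    [BorelSpace X] {S : Set X} {N : ℕ → ℕ} (hN : Tendsto N atTop atTop)
    (t : ∀ m, Fin (N m) → Set X) (hcover : ∀ᶠ m in atTop, S ⊆ ⋃ i, t m i)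
    (hdiam : ∀ m i, ediam (t m i) ≤ (N m : ℝ≥0∞)⁻¹) :
    μH[1] S ≤ 1 := by
  refine (Measure.hausdorffMeasure_le_liminf_sum 1 S _
    (ENNReal.tendsto_inv_nat_nhds_zero.comp hN) t (.of_forall hdiam) hcover).trans ?_
  refine liminf_le_of_frequently_le (.of_forall fun m ↦ ?_)
  calc ∑ i, ediam (t m i) ^ (1 : ℝ) ≤ ∑ _i : Fin (N m), (N m : ℝ≥0∞)⁻¹ :=
        Finset.sum_le_sum fun i _ ↦ by simpa using hdiam m i
    _ ≤ 1 := by simp [ENNReal.mul_inv_le_one]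

theorem abs_sub_le_inv_of_natFloor_mul_eq {x y : ℝ} (hx : 0 ≤ x) (hy : 0 ≤ y) {n : ℕ}
    (hn : 0 < n) (h : ⌊(n : ℝ) * x⌋₊ = ⌊(n : ℝ) * y⌋₊) : |x - y| ≤ (n : ℝ)⁻¹ := by
  have hn' : (0 : ℝ) < n := Nat.cast_pos.2 hn
  have hfloor : ⌊(n : ℝ) * x⌋ = ⌊(n : ℝ) * y⌋ := by
    rw [← Int.natCast_floor_eq_floor (by positivity),
      ← Int.natCast_floor_eq_floor (by positivity), h]
  have := (Int.abs_sub_lt_one_of_floor_eq_floor hfloor).le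
  rw [← mul_sub, abs_mul, abs_of_pos hn'] at this
  rwa [← one_div, le_div_iff₀' hn']

theorem dimH_graph_le_one (f : ℝ → ℝ) {N : ℕ → ℕ} (hN : Tendsto N atTop atTop)
    (hosc : ∀ m, ∀ x ∈ Ico (0 : ℝ) 1, ∀ y ∈ Ico (0 : ℝ) 1,
      ⌊(N m : ℝ) * x⌋₊ = ⌊(N m : ℝ) * y⌋₊ → |f x - f y| ≤ (N m : ℝ)⁻¹) :
    dimH {p : ℝ × ℝ | ∃ x ∈ Ico (0 : ℝ) 1, p = (x, f x)} ≤ 1 := by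
  set G := {p : ℝ × ℝ | ∃ x ∈ Ico (0 : ℝ) 1, p = (x, f x)}
  let t : ∀ m, Fin (N m) → Set (ℝ × ℝ) := fun m i ↦ {p ∈ G | ⌊(N m : ℝ) * p.1⌋₊ = i}
  have hcover : ∀ᶠ m in atTop, G ⊆ ⋃ i, t m i := by
    filter_upwards [hN.eventually_ge_atTop 1] with m hm
    rintro _ ⟨x, hx, rfl⟩
    have hlt : ⌊(N m : ℝ) * x⌋₊ < N m := by
      rw [Nat.floor_lt (by nlinarith [hx.1])]
      nlinarith [hx.2, (Nat.one_le_cast (α := ℝ)).2 hm]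
    exact mem_iUnion.2 ⟨⟨_, hlt⟩, ⟨x, hx, rfl⟩, rfl⟩
  have hdiam : ∀ m i, ediam (t m i) ≤ (N m : ℝ≥0∞)⁻¹ := by
    intro m i
    have hm : 0 < N m := i.pos
    rw [← ENNReal.ofReal_natCast, ← ENNReal.ofReal_inv_of_pos (Nat.cast_pos.2 hm)]
    refine ediam_le_of_forall_dist_le ?_
    rintro _ ⟨⟨x, hx, rfl⟩, hxi⟩ _ ⟨⟨y, hy, rfl⟩, hyi⟩
    have hxy : ⌊(N m : ℝ) * x⌋₊ = ⌊(N m : ℝ) * y⌋₊ := hxi.trans hyi.symm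
    rw [Prod.dist_eq, Real.dist_eq, Real.dist_eq]
    exact max_le (abs_sub_le_inv_of_natFloor_mul_eq hx.1 hy.1 hm hxy) (hosc m x hx y hy hxy)
  have hμ : μH[1] G ≠ ∞ :=
    ((hausdorffMeasure_one_le_of_covers hN t hcover hdiam).trans_lt ENNReal.one_lt_top).ne
  simpa using dimH_le_of_hausdorffMeasure_ne_top (d := 1) (by simpa using hμ)

theorem stmt_17 (s k : ℕ) (hs : 2 ≤ s) (hk : 1 ≤ k)
    (θ : (Fin k → Fin s) ≃ (Fin k → Fin s))
    (Θ : (ℕ → Fin s) → (ℕ → Fin s))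
    (hΘ : ∀ (a : ℕ → Fin s) (m : ℕ) (i : Fin k),
      Θ a (k * m + (i : ℕ)) = θ (fun j => a (k * m + (j : ℕ))) i)
    (F : ℝ → ℝ)
    (hF : ∀ a : ℕ → Fin s, (¬ ∃ N, ∀ n ≥ N, (a n : ℕ) = s - 1) →
      F (∑' n : ℕ, ((a n : ℕ) : ℝ) / (s : ℝ) ^ (n + 1)) =
        ∑' n : ℕ, ((Θ a n : ℕ) : ℝ) / (s : ℝ) ^ (n + 1)) :
    dimH {p : ℝ × ℝ | ∃ x ∈ Set.Ico (0 : ℝ) 1, p = (x, F x)} = 1 := by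
  have : NeZero s := ⟨by omega⟩
  have hF_digits : ∀ x ∈ Ico (0 : ℝ) 1, F x = Real.ofDigits (Θ (Real.digits x s)) :=
    fun x hx ↦ by
      have := hF _ (Real.not_eventually_digits_eq_pred hs hx)
      rwa [← Real.ofDigits_eq_tsum_div, ← Real.ofDigits_eq_tsum_div,
        Real.ofDigits_digits hs hx] at this
  have hN : Tendsto (fun m ↦ s ^ (k * m)) atTop atTop :=
    (tendsto_pow_atTop_atTop_of_one_lt hs).comp (tendsto_id.const_mul_atTop' hk)
  refine le_antisymm (dimH_graph_le_one F hN fun m x hx y hy hxy ↦ ?_) (one_le_dimH_graph F)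
  rw [hF_digits x hx, hF_digits y hy]
  push_cast at hxy ⊢
  exact Real.abs_ofDigits_sub_ofDigits_le
    (blockwise_eq_of_prefix_eq hΘ (Real.digits_eq_of_floor_eq hxy))
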